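/- Let G be a finite simple graph in which every vertex has positive degree, M a set of marked vertices, and ψ : Dart(G) → ℂ a state such that (1) there is a constant a with ψ(e) = a for every dart e with e.fst ∉ M, and (2) Σ_{e : e.fst = v} ψ(e) = 0 for every v ∈ M. Then the coin-and-query part of the step fixes ψ: (C∘Q)ψ = ψ. (The coin acts as the identity on vertices where all outgoing amplitudes are equal, and as sign-negation on vertices where the outgoing amplitudes sum to zero, which cancels the sign flip of the query.) -/

import Mathlib

namespace GraphWalk

variable {V : Type*}

/-- The flip-flop shift operator `S` on the darts of a simple graph:
`(Sψ)(e) = ψ(e.symm)`. -/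
noncomputable def shift (G : SimpleGraph V) (ψ : G.Dart → ℂ) : G.Dart → ℂ :=
  fun e => ψ e.symm

/-- The Grover coin `C`:
`(Cψ)(e) = (2/deg(e.fst)) Σ_{e' : e'.fst = e.fst} ψ(e') − ψ(e)`. -/
noncomputable def coin [Fintype V] [DecidableEq V] (G : SimpleGraph V)
    [DecidableRel G.Adj] (ψ : G.Dart → ℂ) : G.Dart → ℂ :=
  fun e => (2 / (G.degree e.fst : ℂ)) *
      (∑ e' ∈ Finset.univ.filter (fun e' : G.Dart => e'.fst = e.fst), ψ e') - ψ e

/-- The query `Q`, flipping the sign of all amplitudes at marked vertices. -/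
noncomputable def query [DecidableEq V] (G : SimpleGraph V) (M : Finset V)
    (ψ : G.Dart → ℂ) : G.Dart → ℂ :=
  fun e => if e.fst ∈ M then -ψ e else ψ e

/-- One step of the search algorithm, `U' = S ∘ C ∘ Q`. -/
noncomputable def step [Fintype V] [DecidableEq V] (G : SimpleGraph V)
    [DecidableRel G.Adj] (M : Finset V) (ψ : G.Dart → ℂ) : G.Dart → ℂ :=
  shift G (coin G (query G M ψ))

/-- One step of the quantum walk without query, `U = S ∘ C`. -/
noncomputable def walk [Fintype V] [DecidableEq V] (G : SimpleGraph V)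
    [DecidableRel G.Adj] (ψ : G.Dart → ℂ) : G.Dart → ℂ :=
  shift G (coin G ψ)

end GraphWalk

namespace GraphWalk

open Finset

variable {V : Type*} [DecidableEq V] {G : SimpleGraph V}

theorem query_apply_of_mem {M : Finset V} {ψ : G.Dart → ℂ} {e : G.Dart} (he : e.fst ∈ M) :
    query G M ψ e = -ψ e :=
  if_pos he

theorem query_apply_of_notMem {M : Finset V} {ψ : G.Dart → ℂ} {e : G.Dart} (he : e.fst ∉ M) :
    query G M ψ e = ψ e :=
  if_neg he

variable [Fintype V] [DecidableRel G.Adj]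

theorem coin_apply_of_eq_const {ψ : G.Dart → ℂ} {e : G.Dart} {c : ℂ}
    (hψ : ∀ e' : G.Dart, e'.fst = e.fst → ψ e' = c) : coin G ψ e = c := by
  have hdeg : (G.degree e.fst : ℂ) ≠ 0 := by exact_mod_cast e.adj.degree_pos_left.ne'
  have hsum : ∑ e' ∈ univ.filter (fun e' : G.Dart => e'.fst = e.fst), ψ e'
      = G.degree e.fst * c := by
    rw [sum_congr rfl fun e' he' => hψ e' (mem_filter.mp he').2, sum_const,
      SimpleGraph.dart_fst_fiber_card_eq_degree, nsmul_eq_mul]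
  rw [coin, hsum, hψ e rfl]
  field_simp
  ring

theorem coin_apply_of_sum_eq_zero {ψ : G.Dart → ℂ} {e : G.Dart}
    (hψ : ∑ e' ∈ univ.filter (fun e' : G.Dart => e'.fst = e.fst), ψ e' = 0) :
    coin G ψ e = -ψ e := by
  rw [coin, hψ, mul_zero, zero_sub]

end GraphWalk

open GraphWalk Finset in
theorem coin_query_fixes_general {V : Type*} [Fintype V] [DecidableEq V]
    (G : SimpleGraph V) [DecidableRel G.Adj]
    (M : Finset V) (ψ : G.Dart → ℂ) (a : ℂ)
    (h1 : ∀ e : G.Dart, e.fst ∉ M → ψ e = a)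
    (h2 : ∀ v ∈ M, ∑ e ∈ Finset.univ.filter (fun e : G.Dart => e.fst = v), ψ e = 0) :
    GraphWalk.coin G (GraphWalk.query G M ψ) = ψ := by
  funext e
  by_cases hm : e.fst ∈ M
  · have hsum :
        ∑ e' ∈ univ.filter (fun e' : G.Dart => e'.fst = e.fst), query G M ψ e' = 0 := by
      rw [sum_congr rfl fun e' he' => query_apply_of_mem ((mem_filter.mp he').2 ▸ hm),
        sum_neg_distrib, h2 e.fst hm, neg_zero]
    rw [coin_apply_of_sum_eq_zero hsum, query_apply_of_mem hm, neg_neg]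
  · refine (coin_apply_of_eq_const fun e' he' => ?_).trans (h1 e hm).symm
    rw [query_apply_of_notMem (he' ▸ hm), h1 e' (he' ▸ hm)]

/-- The coin-and-query part of the step fixes any state whose amplitudes are constant
on darts with unmarked source and sum to zero at each marked vertex: `(C ∘ Q)ψ = ψ`. -/
theorem coin_query_fixes {V : Type*} [Fintype V] [DecidableEq V]
    (G : SimpleGraph V) [DecidableRel G.Adj] (hdeg : ∀ v : V, 0 < G.degree v)
    (M : Finset V) (ψ : G.Dart → ℂ) (a : ℂ)
    (h1 : ∀ e : G.Dart, e.fst ∉ M → ψ e = a)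
    (h2 : ∀ v ∈ M, ∑ e ∈ Finset.univ.filter (fun e : G.Dart => e.fst = v), ψ e = 0) :
    GraphWalk.coin G (GraphWalk.query G M ψ) = ψ :=
  coin_query_fixes_general G M ψ a h1 h2
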